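/- Let n ∈ ℕ (n ≥ 0) and let H : E → ℝ be continuous with |H(ξ,η)| ≤ (M^{n+2}/(n+1)!)·(ξ+η)^{n+1} for all (ξ,η) ∈ E. Then |Φ_H(ξ,η)| ≤ (M^{n+3}/(n+2)!)·(ξ+η)^{n+2} for all (ξ,η) ∈ E, where M := (f̄ + Λ̄)/2. -/

import Mathlib

/-!
Write `C (τ+s)^k` for the bound on `H`. Each integrand of `Φ_H` is then at most
`Λ̄ C (τ+s)^k` or `f̄ C (τ+s)^k` in absolute value. Every inner integral runs over an interval of
length at most 1, so it is bounded by the supremum of its integrand. The remaining outer integral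
of `(t+η)^k` over `[η, ξ]` is at most `(ξ+η)^(k+1)/(k+1)`, and that of `(2t)^k` over `[0, η]` at
most half of this because `2η ≤ ξ+η`. With the weights `1/4, 1/2, 1/4, 1/2` the four estimates
add up to `(Λ̄ + f̄)/2 = M` times `C (ξ+η)^(k+1)/(k+1)`.
-/

open MeasureTheory Set
open scoped ENNReal

noncomputable section

/-- The triangular domain `D = {(x,y) : 0 ≤ y ≤ x ≤ 1}`. -/
def Dset : Set (ℝ × ℝ) := {p : ℝ × ℝ | 0 ≤ p.2 ∧ p.2 ≤ p.1 ∧ p.1 ≤ 1}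

/-- Partial derivative in the first variable (within `D`). -/
def pd1 (K : ℝ × ℝ → ℝ) (p : ℝ × ℝ) : ℝ := fderivWithin ℝ K Dset p (1, 0)

/-- Partial derivative in the second variable (within `D`). -/
def pd2 (K : ℝ × ℝ → ℝ) (p : ℝ × ℝ) : ℝ := fderivWithin ℝ K Dset p (0, 1)

/-- `K` is a `C²` solution of the kernel equation on `D`:
(i) `k_xx - k_yy = μ k + f + ∫_y^x k(x,z) f(z,y) dz` on `D`;
(ii) `k_x(x,x) + k_y(x,x) = λ0/2`; (iii) `k_y(x,0) = 0`; (iv) `k(0,0) = 0`. -/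
def IsKernelSol (lam0 : ℝ) (c1 : ℝ → ℝ) (f : ℝ → ℝ → ℝ) (K : ℝ × ℝ → ℝ) : Prop :=
  ContDiffOn ℝ 2 K Dset ∧
  (∀ p ∈ Dset, pd1 (pd1 K) p - pd2 (pd2 K) p =
      (lam0 - c1 p.1 + c1 p.2) * K p + f p.1 p.2 + ∫ z in p.2..p.1, K (p.1, z) * f z p.2) ∧
  (∀ x ∈ Icc (0:ℝ) 1, pd1 K (x, x) + pd2 K (x, x) = lam0 / 2) ∧
  (∀ x ∈ Icc (0:ℝ) 1, pd2 K (x, 0) = 0) ∧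
  K (0, 0) = 0

/-- `f̄ := max_{[0,1]²} |f|`. -/
def fbar (f : ℝ → ℝ → ℝ) : ℝ :=
  sSup ((fun p : ℝ × ℝ => |f p.1 p.2|) '' (Icc (0:ℝ) 1 ×ˢ Icc (0:ℝ) 1))

/-- `Λ̄ := max {λ0, max_D |λ0 - c1(x) + c1(y)|}`. -/
def Lambdabar (lam0 : ℝ) (c1 : ℝ → ℝ) : ℝ :=
  max lam0 (sSup ((fun p : ℝ × ℝ => |lam0 - c1 p.1 + c1 p.2|) '' Dset))

/-- `M := (f̄ + Λ̄)/2`. -/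
def Mconst (lam0 : ℝ) (c1 : ℝ → ℝ) (f : ℝ → ℝ → ℝ) : ℝ :=
  (fbar f + Lambdabar lam0 c1) / 2

/-- The transformed domain `E = {(ξ,η) : 0 ≤ η ≤ 1, η ≤ ξ ≤ 2 - η}`. -/
def Eset : Set (ℝ × ℝ) := {p : ℝ × ℝ | 0 ≤ p.2 ∧ p.2 ≤ 1 ∧ p.2 ≤ p.1 ∧ p.1 ≤ 2 - p.2}

/-- `μ̃(ξ,η) := λ0 - c1((ξ+η)/2) + c1((ξ-η)/2)`. -/
def mutld (lam0 : ℝ) (c1 : ℝ → ℝ) (xi eta : ℝ) : ℝ :=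
  lam0 - c1 ((xi + eta) / 2) + c1 ((xi - eta) / 2)

/-- The inhomogeneous term `G0` of the integral equation. -/
def Gzero (lam0 : ℝ) (f : ℝ → ℝ → ℝ) (xi eta : ℝ) : ℝ :=
  lam0 / 4 * (xi + eta)
    + (1 / 4) * (∫ tau in eta..xi, ∫ s in (0:ℝ)..eta, f ((tau + s) / 2) ((tau - s) / 2))
    + (1 / 2) * (∫ tau in (0:ℝ)..eta, ∫ s in (0:ℝ)..tau, f ((tau + s) / 2) ((tau - s) / 2))

/-- The integral operator `Φ_H`. -/
def Phi (lam0 : ℝ) (c1 : ℝ → ℝ) (f : ℝ → ℝ → ℝ) (H : ℝ → ℝ → ℝ) (xi eta : ℝ) : ℝ :=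
  (1 / 4) * (∫ tau in eta..xi, ∫ s in (0:ℝ)..eta, mutld lam0 c1 tau s * H tau s)
    + (1 / 2) * (∫ tau in (0:ℝ)..eta, ∫ s in (0:ℝ)..tau, mutld lam0 c1 tau s * H tau s)
    + (1 / 4) * (∫ z in eta..xi, ∫ s in (0:ℝ)..eta, ∫ tau in z..(z + eta - s),
        f ((tau - s) / 2) (z - (tau + s) / 2) * H tau s)
    + (1 / 2) * (∫ z in (0:ℝ)..eta, ∫ s in (0:ℝ)..z, ∫ tau in z..(2 * z - s),
        f ((tau - s) / 2) (z - (tau + s) / 2) * H tau s)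

lemma abs_intervalIntegral_le_integral {h g : ℝ → ℝ} {a b : ℝ} (hab : a ≤ b)
    (hg : IntervalIntegrable g volume a b) (hle : ∀ t ∈ Ioc a b, |h t| ≤ g t) :
    |∫ t in a..b, h t| ≤ ∫ t in a..b, g t :=
  intervalIntegral.norm_integral_le_of_norm_le (f := h) hab (ae_of_all _ hle) hg

lemma abs_intervalIntegral_le_of_sub_le_one {h : ℝ → ℝ} {a b K : ℝ} (hab : a ≤ b)
    (hba : b - a ≤ 1) (hK : 0 ≤ K) (hle : ∀ t ∈ Ioc a b, |h t| ≤ K) :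
    |∫ t in a..b, h t| ≤ K :=
  calc |∫ t in a..b, h t| ≤ K * |b - a| :=
        intervalIntegral.norm_integral_le_of_norm_le_const (f := h) fun t ht =>
          hle t (uIoc_of_le hab ▸ ht)
    _ ≤ K := by rw [abs_of_nonneg (sub_nonneg.2 hab)]; exact mul_le_of_le_one_right hK hba

lemma abs_integral_le_of_le_mul_add_pow {G : ℝ → ℝ} {K a b : ℝ} (k : ℕ) (hK : 0 ≤ K)
    (ha : 0 ≤ a) (hab : a ≤ b) (hG : ∀ t ∈ Ioc a b, |G t| ≤ K * (t + a) ^ k) :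
    |∫ t in a..b, G t| ≤ K * ((b + a) ^ (k + 1) / (k + 1)) :=
  calc |∫ t in a..b, G t| ≤ ∫ t in a..b, K * (t + a) ^ k :=
        abs_intervalIntegral_le_integral hab (Continuous.intervalIntegrable (by fun_prop) _ _) hG
    _ = K * (((b + a) ^ (k + 1) - (a + a) ^ (k + 1)) / (k + 1)) := by
        rw [intervalIntegral.integral_const_mul,
          intervalIntegral.integral_comp_add_right (· ^ k), integral_pow]
    _ ≤ K * ((b + a) ^ (k + 1) / (k + 1)) := by
        gcongr
        exact sub_le_self _ (pow_nonneg (by linarith) _)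

lemma abs_integral_le_of_le_mul_two_mul_pow {G : ℝ → ℝ} {K a : ℝ} (k : ℕ) (ha : 0 ≤ a)
    (hG : ∀ t ∈ Ioc 0 a, |G t| ≤ K * (2 * t) ^ k) :
    |∫ t in 0..a, G t| ≤ K * ((2 * a) ^ (k + 1) / (2 * (k + 1))) :=
  calc |∫ t in 0..a, G t| ≤ ∫ t in 0..a, K * (2 * t) ^ k :=
        abs_intervalIntegral_le_integral ha (Continuous.intervalIntegrable (by fun_prop) _ _) hG
    _ = K * ((2 * a) ^ (k + 1) / (2 * (k + 1))) := by
        rw [intervalIntegral.integral_const_mul,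
          intervalIntegral.integral_comp_mul_left (· ^ k) two_ne_zero, integral_pow]
        rw [mul_zero, zero_pow k.succ_ne_zero, sub_zero, smul_eq_mul]
        field_simp

lemma fbar_nonneg (f : ℝ → ℝ → ℝ) : 0 ≤ fbar f :=
  Real.sSup_nonneg <| by rintro _ ⟨p, -, rfl⟩; exact abs_nonneg _

lemma Lambdabar_nonneg (lam0 : ℝ) (c1 : ℝ → ℝ) : 0 ≤ Lambdabar lam0 c1 :=
  le_max_of_le_right <| Real.sSup_nonneg <| by rintro _ ⟨p, -, rfl⟩; exact abs_nonneg _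

lemma Mconst_nonneg (lam0 : ℝ) (c1 : ℝ → ℝ) (f : ℝ → ℝ → ℝ) : 0 ≤ Mconst lam0 c1 f :=
  div_nonneg (add_nonneg (fbar_nonneg f) (Lambdabar_nonneg lam0 c1)) zero_le_two

lemma abs_le_fbar {f : ℝ → ℝ → ℝ}
    (hf : ContinuousOn (fun p : ℝ × ℝ => f p.1 p.2) (Icc 0 1 ×ˢ Icc 0 1)) {x y : ℝ}
    (hx : x ∈ Icc (0:ℝ) 1) (hy : y ∈ Icc (0:ℝ) 1) : |f x y| ≤ fbar f :=
  le_csSup ((isCompact_Icc.prod isCompact_Icc).bddAbove_image hf.abs) ⟨(x, y), ⟨hx, hy⟩, rfl⟩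

lemma isCompact_Dset : IsCompact Dset :=
  (isCompact_Icc.prod isCompact_Icc : IsCompact (Icc (0:ℝ) 1 ×ˢ Icc (0:ℝ) 1)).of_isClosed_subset
    ((isClosed_le continuous_const continuous_snd).inter
      ((isClosed_le continuous_snd continuous_fst).inter
        (isClosed_le continuous_fst continuous_const)))
    fun _ ⟨h1, h2, h3⟩ => ⟨⟨h1.trans h2, h3⟩, ⟨h1, h2.trans h3⟩⟩

lemma abs_mutld_le_Lambdabar {lam0 : ℝ} {c1 : ℝ → ℝ} (hc1 : ContinuousOn c1 (Icc 0 1))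
    {tau s : ℝ} (hE : (tau, s) ∈ Eset) : |mutld lam0 c1 tau s| ≤ Lambdabar lam0 c1 := by
  obtain ⟨hs0, -, hst, hts⟩ := hE
  have hcont : ContinuousOn (fun p : ℝ × ℝ => |lam0 - c1 p.1 + c1 p.2|) Dset :=
    ((continuousOn_const.sub (hc1.comp continuousOn_fst fun _ hp =>
      ⟨hp.1.trans hp.2.1, hp.2.2⟩)).add (hc1.comp continuousOn_snd fun _ hp =>
        ⟨hp.1, hp.2.1.trans hp.2.2⟩)).abs
  have hD : ((tau + s) / 2, (tau - s) / 2) ∈ Dset := ⟨by linarith, by linarith, by linarith⟩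
  exact le_max_of_le_right (le_csSup (isCompact_Dset.bddAbove_image hcont) ⟨_, hD, rfl⟩)

section

variable {lam0 : ℝ} {c1 : ℝ → ℝ} {f H : ℝ → ℝ → ℝ} {C : ℝ} {k : ℕ}

lemma abs_mul_le_of_add_le (hC : 0 ≤ C)
    (hH : ∀ tau s, (tau, s) ∈ Eset → |H tau s| ≤ C * (tau + s) ^ k)
    {a A tau s u : ℝ} (ha : |a| ≤ A) (hE : (tau, s) ∈ Eset) (hu : tau + s ≤ u) :
    |a * H tau s| ≤ A * C * u ^ k := by
  have hts : 0 ≤ tau + s := by obtain ⟨h1, -, h2, -⟩ := hE; linarith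
  rw [abs_mul, mul_assoc]
  exact mul_le_mul ha ((hH tau s hE).trans (by gcongr)) (abs_nonneg _) ((abs_nonneg a).trans ha)

lemma abs_integral_mutld_strip_le (hc1 : ContinuousOn c1 (Icc 0 1)) (hC : 0 ≤ C)
    (hH : ∀ tau s, (tau, s) ∈ Eset → |H tau s| ≤ C * (tau + s) ^ k)
    {xi eta : ℝ} (hE : (xi, eta) ∈ Eset) :
    |∫ tau in eta..xi, ∫ s in (0:ℝ)..eta, mutld lam0 c1 tau s * H tau s| ≤
      Lambdabar lam0 c1 * C * ((xi + eta) ^ (k + 1) / (k + 1)) := by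
  obtain ⟨he0, he1, hex, hx2⟩ := hE
  have hΛC := mul_nonneg (Lambdabar_nonneg lam0 c1) hC
  refine abs_integral_le_of_le_mul_add_pow k hΛC he0 hex fun tau ⟨ht, htx⟩ => ?_
  refine abs_intervalIntegral_le_of_sub_le_one he0 (by linarith)
    (mul_nonneg hΛC (pow_nonneg (by linarith) _)) fun s ⟨hs, hse⟩ => ?_
  have hmem : (tau, s) ∈ Eset := ⟨hs.le, by linarith, by linarith, by linarith⟩
  exact abs_mul_le_of_add_le hC hH (abs_mutld_le_Lambdabar hc1 hmem) hmem (by linarith)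

lemma abs_integral_mutld_triangle_le (hc1 : ContinuousOn c1 (Icc 0 1)) (hC : 0 ≤ C)
    (hH : ∀ tau s, (tau, s) ∈ Eset → |H tau s| ≤ C * (tau + s) ^ k)
    {eta : ℝ} (he0 : 0 ≤ eta) (he1 : eta ≤ 1) :
    |∫ tau in (0:ℝ)..eta, ∫ s in (0:ℝ)..tau, mutld lam0 c1 tau s * H tau s| ≤
      Lambdabar lam0 c1 * C * ((2 * eta) ^ (k + 1) / (2 * (k + 1))) := by
  have hΛC := mul_nonneg (Lambdabar_nonneg lam0 c1) hC
  refine abs_integral_le_of_le_mul_two_mul_pow k he0 fun tau ⟨ht, hte⟩ => ?_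
  refine abs_intervalIntegral_le_of_sub_le_one ht.le (by linarith)
    (mul_nonneg hΛC (pow_nonneg (by linarith) _)) fun s ⟨hs, hst⟩ => ?_
  have hmem : (tau, s) ∈ Eset := ⟨hs.le, by linarith, hst, by linarith⟩
  exact abs_mul_le_of_add_le hC hH (abs_mutld_le_Lambdabar hc1 hmem) hmem (by linarith)

lemma abs_kernel_mul_le (hf : ContinuousOn (fun p : ℝ × ℝ => f p.1 p.2) (Icc 0 1 ×ˢ Icc 0 1))
    (hC : 0 ≤ C) (hH : ∀ tau s, (tau, s) ∈ Eset → |H tau s| ≤ C * (tau + s) ^ k)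
    {z s tau u : ℝ} (hs : 0 ≤ s) (hzt : z ≤ tau) (htz : tau + s ≤ 2 * z)
    (hu : tau + s ≤ u) (hu2 : u ≤ 2) :
    |f ((tau - s) / 2) (z - (tau + s) / 2) * H tau s| ≤ fbar f * C * u ^ k :=
  abs_mul_le_of_add_le hC hH
    (abs_le_fbar hf ⟨by linarith, by linarith⟩ ⟨by linarith, by linarith⟩)
    ⟨hs, by linarith, by linarith, by linarith⟩ hu

lemma abs_integral_kernel_strip_le
    (hf : ContinuousOn (fun p : ℝ × ℝ => f p.1 p.2) (Icc 0 1 ×ˢ Icc 0 1)) (hC : 0 ≤ C)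
    (hH : ∀ tau s, (tau, s) ∈ Eset → |H tau s| ≤ C * (tau + s) ^ k)
    {xi eta : ℝ} (hE : (xi, eta) ∈ Eset) :
    |∫ z in eta..xi, ∫ s in (0:ℝ)..eta, ∫ tau in z..(z + eta - s),
        f ((tau - s) / 2) (z - (tau + s) / 2) * H tau s| ≤
      fbar f * C * ((xi + eta) ^ (k + 1) / (k + 1)) := by
  obtain ⟨he0, he1, hex, hx2⟩ := hE
  have hFC := mul_nonneg (fbar_nonneg f) hC
  refine abs_integral_le_of_le_mul_add_pow k hFC he0 hex fun z ⟨hz, hzx⟩ => ?_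
  have hbound := mul_nonneg hFC (pow_nonneg (by linarith : 0 ≤ z + eta) k)
  refine abs_intervalIntegral_le_of_sub_le_one he0 (by linarith) hbound fun s ⟨hs, hse⟩ => ?_
  refine abs_intervalIntegral_le_of_sub_le_one (by linarith) (by linarith) hbound
    fun tau ⟨ht, hte⟩ => ?_
  exact abs_kernel_mul_le hf hC hH hs.le ht.le (by linarith) (by linarith) (by linarith)

lemma abs_integral_kernel_triangle_le
    (hf : ContinuousOn (fun p : ℝ × ℝ => f p.1 p.2) (Icc 0 1 ×ˢ Icc 0 1)) (hC : 0 ≤ C)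
    (hH : ∀ tau s, (tau, s) ∈ Eset → |H tau s| ≤ C * (tau + s) ^ k)
    {eta : ℝ} (he0 : 0 ≤ eta) (he1 : eta ≤ 1) :
    |∫ z in (0:ℝ)..eta, ∫ s in (0:ℝ)..z, ∫ tau in z..(2 * z - s),
        f ((tau - s) / 2) (z - (tau + s) / 2) * H tau s| ≤
      fbar f * C * ((2 * eta) ^ (k + 1) / (2 * (k + 1))) := by
  have hFC := mul_nonneg (fbar_nonneg f) hC
  refine abs_integral_le_of_le_mul_two_mul_pow k he0 fun z ⟨hz, hze⟩ => ?_
  have hbound := mul_nonneg hFC (pow_nonneg (by linarith : 0 ≤ 2 * z) k)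
  refine abs_intervalIntegral_le_of_sub_le_one hz.le (by linarith) hbound fun s ⟨hs, hsz⟩ => ?_
  refine abs_intervalIntegral_le_of_sub_le_one (by linarith) (by linarith) hbound
    fun tau ⟨ht, hte⟩ => ?_
  exact abs_kernel_mul_le hf hC hH hs.le ht.le (by linarith) (by linarith) (by linarith)

theorem abs_Phi_le (hc1 : ContinuousOn c1 (Icc 0 1))
    (hf : ContinuousOn (fun p : ℝ × ℝ => f p.1 p.2) (Icc 0 1 ×ˢ Icc 0 1)) (hC : 0 ≤ C)
    (hH : ∀ tau s, (tau, s) ∈ Eset → |H tau s| ≤ C * (tau + s) ^ k)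
    {xi eta : ℝ} (hE : (xi, eta) ∈ Eset) :
    |Phi lam0 c1 f H xi eta| ≤ Mconst lam0 c1 f * C * ((xi + eta) ^ (k + 1) / (k + 1)) := by
  have he0 : 0 ≤ eta := hE.1
  have he1 : eta ≤ 1 := hE.2.1
  have hex : eta ≤ xi := hE.2.2.1
  have h1 := abs_integral_mutld_strip_le (lam0 := lam0) hc1 hC hH hE
  have h2 := abs_integral_mutld_triangle_le (lam0 := lam0) hc1 hC hH he0 he1
  have h3 := abs_integral_kernel_strip_le hf hC hH hE
  have h4 := abs_integral_kernel_triangle_le hf hC hH he0 he1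
  have hhalf : (2 * eta) ^ (k + 1) / (2 * (k + 1)) ≤ (xi + eta) ^ (k + 1) / (k + 1) / 2 := by
    rw [div_div, mul_comm (k + 1 : ℝ)]
    gcongr
    linarith
  have h2' := mul_le_mul_of_nonneg_left hhalf (mul_nonneg (Lambdabar_nonneg lam0 c1) hC)
  have h4' := mul_le_mul_of_nonneg_left hhalf (mul_nonneg (fbar_nonneg f) hC)
  rw [abs_le] at h1 h2 h3 h4 ⊢
  unfold Phi Mconst
  constructor <;> linarith
end

theorem Phi_induction_step_general (lam0 : ℝ)
    (c1 : ℝ → ℝ) (hc1 : ContinuousOn c1 (Icc 0 1))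
    (f : ℝ → ℝ → ℝ)
    (hf : ContinuousOn (fun p : ℝ × ℝ => f p.1 p.2) (Icc 0 1 ×ˢ Icc 0 1))
    (n : ℕ) (H : ℝ → ℝ → ℝ)
    (hHbound : ∀ xi eta : ℝ, (xi, eta) ∈ Eset →
      |H xi eta| ≤ Mconst lam0 c1 f ^ (n + 2) / (Nat.factorial (n + 1) : ℝ)
        * (xi + eta) ^ (n + 1)) :
    ∀ xi eta : ℝ, (xi, eta) ∈ Eset →
      |Phi lam0 c1 f H xi eta| ≤
        Mconst lam0 c1 f ^ (n + 3) / (Nat.factorial (n + 2) : ℝ) * (xi + eta) ^ (n + 2) := by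
  intro xi eta hE
  calc |Phi lam0 c1 f H xi eta|
      ≤ Mconst lam0 c1 f * (Mconst lam0 c1 f ^ (n + 2) / (Nat.factorial (n + 1) : ℝ))
          * ((xi + eta) ^ (n + 1 + 1) / ((n + 1 : ℕ) + 1)) :=
        abs_Phi_le hc1 hf (div_nonneg (pow_nonneg (Mconst_nonneg lam0 c1 f) _) (Nat.cast_nonneg _))
          hHbound hE
    _ = Mconst lam0 c1 f ^ (n + 3) / (Nat.factorial (n + 2) : ℝ) * (xi + eta) ^ (n + 2) := by
        rw [Nat.factorial_succ (n + 1)]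
        push_cast
        field_simp
        ring

/-- Induction step: if `|H| ≤ M^(n+2)/(n+1)! (ξ+η)^(n+1)` on `E`, then
`|Φ_H| ≤ M^(n+3)/(n+2)! (ξ+η)^(n+2)` on `E`. -/
theorem Phi_induction_step (lam0 : ℝ) (hlam0 : 0 < lam0)
    (c1 : ℝ → ℝ) (hc1 : ContinuousOn c1 (Icc 0 1))
    (f : ℝ → ℝ → ℝ)
    (hf : ContinuousOn (fun p : ℝ × ℝ => f p.1 p.2) (Icc 0 1 ×ˢ Icc 0 1))
    (n : ℕ) (H : ℝ → ℝ → ℝ) (hHcont : ContinuousOn (fun p : ℝ × ℝ => H p.1 p.2) Eset)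
    (hHbound : ∀ xi eta : ℝ, (xi, eta) ∈ Eset →
      |H xi eta| ≤ Mconst lam0 c1 f ^ (n + 2) / (Nat.factorial (n + 1) : ℝ)
        * (xi + eta) ^ (n + 1)) :
    ∀ xi eta : ℝ, (xi, eta) ∈ Eset →
      |Phi lam0 c1 f H xi eta| ≤
        Mconst lam0 c1 f ^ (n + 3) / (Nat.factorial (n + 2) : ℝ) * (xi + eta) ^ (n + 2) :=
  Phi_induction_step_general lam0 c1 hc1 f hf n H hHbound
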